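/- arXiv:2601.05797 — 3 statements merged into one kernel-verified Lean document; each statement's English description precedes it below -/
import Mathlib

section
/- If a is an element of the left nucleus (or middle nucleus, or right nucleus) of a unital non-associative algebra S, then the subalgebra of S generated by a is associative. -/
/-!
Each nucleus is closed under products, hence is a subalgebra containing `1`; so the nucleus
containing `a` contains the subalgebra generated by `1` and `a`. A triple from that subalgebra
then associates because one of its entries (the one in the position of that nucleus) lies in it.
-/

/-- The left nucleus: elements `a` with `a*(b*c) = (a*b)*c` for all `b, c`. -/
def leftNucleus (S : Type*) [NonAssocRing S] : Set S :=
  {a | ∀ b c : S, a * (b * c) = (a * b) * c}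

/-- The middle nucleus. -/
def middleNucleus (S : Type*) [NonAssocRing S] : Set S :=
  {b | ∀ a c : S, (a * b) * c = a * (b * c)}

/-- The right nucleus. -/
def rightNucleus (S : Type*) [NonAssocRing S] : Set S :=
  {c | ∀ a b : S, (a * b) * c = a * (b * c)}

section Nuclei

variable (K S : Type*) [CommSemiring K] [NonAssocRing S] [Module K S]

def leftNucleusSubalgebra [IsScalarTower K S S] : NonUnitalSubalgebra K S where
  carrier := leftNucleus S
  zero_mem' b c := by simp
  add_mem' {x y} hx hy b c := by rw [add_mul, add_mul, add_mul, hx, hy]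
  mul_mem' {x y} hx hy b c :=
    calc x * y * (b * c) = x * (y * (b * c)) := (hx y (b * c)).symm
      _ = x * (y * b * c) := by rw [hy b c]
      _ = x * (y * b) * c := hx (y * b) c
      _ = x * y * b * c := by rw [hx y b]
  smul_mem' k x hx b c := by rw [smul_mul_assoc, smul_mul_assoc, smul_mul_assoc, hx]

def middleNucleusSubalgebra [SMulCommClass K S S] [IsScalarTower K S S] :
    NonUnitalSubalgebra K S where
  carrier := middleNucleus S
  zero_mem' b c := by simp
  add_mem' {x y} hx hy b c := by rw [mul_add, add_mul, add_mul, mul_add, hx, hy]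
  mul_mem' {x y} hx hy b c :=
    calc b * (x * y) * c = b * x * y * c := by rw [hx b y]
      _ = b * x * (y * c) := hy (b * x) c
      _ = b * (x * (y * c)) := hx b (y * c)
      _ = b * (x * y * c) := by rw [hy x c]
  smul_mem' k x hx b c := by
    rw [mul_smul_comm, smul_mul_assoc, smul_mul_assoc, mul_smul_comm, hx]

def rightNucleusSubalgebra [SMulCommClass K S S] : NonUnitalSubalgebra K S where
  carrier := rightNucleus S
  zero_mem' b c := by simp
  add_mem' {x y} hx hy b c := by rw [mul_add, mul_add, mul_add, hx, hy]
  mul_mem' {x y} hx hy b c :=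
    calc b * c * (x * y) = b * c * x * y := (hy (b * c) x).symm
      _ = b * (c * x) * y := by rw [hx b c]
      _ = b * (c * x * y) := hy b (c * x)
      _ = b * (c * (x * y)) := by rw [hy c x]
  smul_mem' k x hx b c := by rw [mul_smul_comm, mul_smul_comm, mul_smul_comm, hx]

variable {K S}

theorem one_mem_leftNucleusSubalgebra [IsScalarTower K S S] :
    (1 : S) ∈ leftNucleusSubalgebra K S := fun b c => by simp

theorem one_mem_middleNucleusSubalgebra [SMulCommClass K S S] [IsScalarTower K S S] :
    (1 : S) ∈ middleNucleusSubalgebra K S := fun b c => by simp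

theorem one_mem_rightNucleusSubalgebra [SMulCommClass K S S] :
    (1 : S) ∈ rightNucleusSubalgebra K S := fun b c => by simp

theorem adjoin_one_pair_le [SMulCommClass K S S] [IsScalarTower K S S]
    {T : NonUnitalSubalgebra K S} {a : S} (h1 : (1 : S) ∈ T)
    (ha : a ∈ T) : NonUnitalAlgebra.adjoin K ({1, a} : Set S) ≤ T :=
  NonUnitalAlgebra.adjoin_le (Set.insert_subset h1 (Set.singleton_subset_iff.2 ha))

end Nuclei

/-- If `a` lies in the left nucleus (or middle nucleus, or right nucleus) of a unital
non-associative algebra `S`, then the subalgebra of `S` generated by `a` (the smallest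
subalgebra containing `a` and `1`) is associative. -/
theorem adjoin_self_associative {K S : Type*} [Field K] [NonAssocRing S]
    [Module K S] [SMulCommClass K S S] [IsScalarTower K S S]
    (a : S) (ha : a ∈ leftNucleus S ∪ middleNucleus S ∪ rightNucleus S) :
    ∀ x ∈ NonUnitalAlgebra.adjoin K ({1, a} : Set S),
      ∀ y ∈ NonUnitalAlgebra.adjoin K ({1, a} : Set S),
        ∀ z ∈ NonUnitalAlgebra.adjoin K ({1, a} : Set S),
          (x * y) * z = x * (y * z) := by
  intro x hx y hy z hz
  rcases ha with (ha_left | ha_middle) | ha_right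
  · exact (adjoin_one_pair_le (T := leftNucleusSubalgebra K S)
      one_mem_leftNucleusSubalgebra ha_left hx y z).symm
  · exact adjoin_one_pair_le (T := middleNucleusSubalgebra K S)
      one_mem_middleNucleusSubalgebra ha_middle hy x z
  · exact adjoin_one_pair_le (T := rightNucleusSubalgebra K S)
      one_mem_rightNucleusSubalgebra ha_right hz x y
end

section
/- Let S be a K-algebra with pseudo-degree function χ, let a ∈ N(S) with m = χ(a) > 0, and suppose C_S(a) satisfies condition D(ℓ). Then C_S(a) is a free left K[a]-module of rank at most ℓm. -/
/-- A pseudo-degree function on a (not necessarily associative) algebra `S`. -/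
def IsPseudoDegree {S : Type*} [NonAssocRing S] (χ : S → WithBot ℤ) : Prop :=
  (∀ a : S, χ a = ⊥ ↔ a = 0) ∧
  (∀ a b : S, χ (a * b) = χ a + χ b) ∧
  (∀ a b : S, χ (a + b) ≤ max (χ a) (χ b))

/-- The nucleus of `S`. -/
def nucleus (S : Type*) [NonAssocRing S] : Set S :=
  {a | (∀ b c : S, a * (b * c) = (a * b) * c) ∧
       (∀ b c : S, (b * a) * c = b * (a * c)) ∧
       (∀ b c : S, (b * c) * a = b * (c * a))}

/-- The centralizer of `a` in `S`. -/
def centralizer {S : Type*} [NonAssocRing S] (a : S) : Set S :=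
  {b | a * b = b * a}

/-- Condition `D(ℓ)` for a subset `B` of `S` with respect to a pseudo-degree function
`χ`: every nonzero element of `B` has `χ`-value `≥ 0`, and whenever `ℓ + 1` elements
of `B` are all mapped to the same integer by `χ`, some nontrivial `K`-linear
combination of them has strictly smaller `χ`-value. -/
def CondD (K : Type*) {S : Type*} [Field K] [NonAssocRing S] [Module K S]
    (χ : S → WithBot ℤ) (B : Set S) (ℓ : ℕ) : Prop :=
  (∀ b ∈ B, b ≠ 0 → 0 ≤ χ b) ∧
  ∀ (f : Fin (ℓ + 1) → S) (n : ℤ), (∀ i, f i ∈ B) →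
    (∀ i, χ (f i) = (n : WithBot ℤ)) →
    ∃ c : Fin (ℓ + 1) → K, (∃ i, c i ≠ 0) ∧
      χ (∑ i, c i • f i) < (n : WithBot ℤ)

/-- Powers of an element of a non-associative unital ring. -/
def apow {S : Type*} [NonAssocRing S] (a : S) : ℕ → S
  | 0 => 1
  | n + 1 => a * apow a n

/-- Evaluation of a polynomial `p ∈ K[x]` at an element `a` of a non-associative
`K`-algebra; for `a` in the nucleus this is the usual evaluation in `K[a]`. -/
noncomputable def evalAt {K S : Type*} [Field K] [NonAssocRing S] [Module K S]
    (a : S) (p : Polynomial K) : S :=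
  p.sum fun i c => c • apow a i

/-!
Write `V n = {c ∈ C_S(a) : χ c ≤ n}`. Condition `D(ℓ)` bounds the dimension of `V n / V (n - 1)`
by `ℓ`, so every `V n` is finite dimensional and `dim V n ≤ ℓ (n + 1)`.
Since `χ (a c) = m + χ c`, left multiplication by `a` embeds `V n / V (n - 1)` into
`V (n + m) / V (n + m - 1)`; these dimensions are bounded by `ℓ` and nondecreasing along each
residue class mod `m`, hence eventually stationary, and from then on
`V (n + m) = V (n + m - 1) + a V n`. So `C_S(a)` is generated over `K[a]` by a finite-dimensional
`V N`; it is torsion free because `χ (p(a) c) = m deg p + χ c`, hence free over the PID `K[x]`.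
Finally, if `b₁, …, b_k` is a basis lying in `V B`, the `(M + 1) k` vectors `aʲ bᵢ` with `j ≤ M`
are `K`-independent and lie in `V (B + M m)`, so `(M + 1) k ≤ ℓ (B + M m + 1)` for all `M`,
which forces `k ≤ ℓ m`.
-/

open Polynomial Module Filter

theorem Submodule.finrank_le_finrank_add_of_exists_sum_mem {K V : Type*} [Field K] [AddCommGroup V]
    [Module K V] {U W : Submodule K V} (hWU : W ≤ U) [FiniteDimensional K W] {ℓ : ℕ}
    (h : ∀ f : Fin (ℓ + 1) → U, ∃ c : Fin (ℓ + 1) → K, c ≠ 0 ∧ ∑ i, c i • (f i : V) ∈ W) :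
    FiniteDimensional K U ∧ finrank K U ≤ finrank K W + ℓ := by
  set W' := W.comap U.subtype
  have hrank : Module.rank K (U ⧸ W') ≤ ℓ := by
    by_contra! hlt
    obtain ⟨v, hv⟩ := le_rank_iff (n := ℓ + 1).1 (by
      rw [Nat.cast_succ, ← Cardinal.succ_natCast]
      exact Order.succ_le_of_lt hlt)
    choose f hf using fun i => W'.mkQ_surjective (v i)
    obtain ⟨c, hc, hmem⟩ := h f
    refine hc (funext (Fintype.linearIndependent_iff.1 hv c ?_))
    have hsum : ∑ i, c i • v i = W'.mkQ (∑ i, c i • f i) := by simp [hf]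
    rw [hsum, Submodule.mkQ_apply, Submodule.Quotient.mk_eq_zero]
    simpa [W'] using hmem
  have : FiniteDimensional K (U ⧸ W') :=
    Module.rank_lt_aleph0_iff.1 (hrank.trans_lt (Cardinal.natCast_lt_aleph0))
  have : FiniteDimensional K W' := (Submodule.comapSubtypeEquivOfLe hWU).symm.finiteDimensional
  have : FiniteDimensional K U := Module.Finite.of_submodule_quotient W'
  refine ⟨this, ?_⟩
  rw [← Submodule.finrank_quotient_add_finrank W',
    (Submodule.comapSubtypeEquivOfLe hWU).finrank_eq, add_comm]
  exact Nat.add_le_add_left (finrank_le_of_rank_le hrank) _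

lemma WithBot.le_coe_sub_one_iff {x : WithBot ℤ} {n : ℤ} :
    x ≤ ((n - 1 : ℤ) : WithBot ℤ) ↔ x < n := by
  cases x with
  | bot => simp
  | coe z => norm_cast; omega

lemma eventually_map_add_eq_of_map_le_map_add {d : ℕ → ℕ} {m ℓ : ℕ}
    (hmono : ∀ n, d n ≤ d (n + m)) (hbdd : ∀ n, d n ≤ ℓ) : ∀ᶠ n in atTop, d (n + m) = d n := by
  -- the window sums `g` are monotone, since `g (n + 1) - g n = d (n + m) - d n`, and bounded
  set g : ℕ → ℕ := fun n => ∑ i ∈ Finset.range m, d (n + i)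
  have hg : ∀ n, g (n + 1) + d n = g n + d (n + m) := fun n => by
    simp only [g]
    rw [← Finset.sum_range_succ, Finset.sum_range_succ', add_zero]
    simp only [add_assoc, add_comm 1]
  have hgmono : Monotone g := monotone_nat_of_le_succ fun n => by linarith [hg n, hmono n]
  have hgbdd : BddAbove (Set.range g) :=
    ⟨m * ℓ, by
      rintro _ ⟨n, rfl⟩
      simpa using Finset.sum_le_card_nsmul (Finset.range m) _ ℓ fun i _ => hbdd (n + i)⟩
  obtain ⟨N, hN⟩ := Nat.sSup_mem (Set.range_nonempty g) hgbdd
  have hmax : ∀ k, g k ≤ g N := fun k => hN ▸ le_csSup hgbdd (Set.mem_range_self k)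
  refine eventually_atTop.2 ⟨N, fun n hn => ?_⟩
  have := hgmono hn
  have := hgmono (hn.trans (Nat.le_add_right n 1))
  linarith [hg n, hmax n, hmax (n + 1)]

lemma le_of_forall_succ_mul_le {k r c : ℕ} (h : ∀ M : ℕ, (M + 1) * k ≤ M * r + c) : k ≤ r := by
  by_contra! hlt
  nlinarith [h c]

section

variable {K S : Type*} [Field K] [NonAssocRing S] [Module K S]

lemma evalAt_monomial (a : S) (n : ℕ) (r : K) : evalAt a (monomial n r) = r • apow a n := by
  simp [evalAt, sum_monomial_index]

lemma evalAt_add (a : S) (p q : K[X]) : evalAt a (p + q) = evalAt a p + evalAt a q := by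
  simp [evalAt, sum_add_index, add_smul]

lemma mul_mem_centralizer_of_mem_nucleus {a : S} (ha : a ∈ nucleus S) {c : S}
    (hc : c ∈ centralizer a) : a * c ∈ centralizer a :=
  show a * (a * c) = a * c * a by rw [ha.2.2 a c, hc]

namespace IsPseudoDegree

variable {χ : S → WithBot ℤ}

lemma map_zero (hχ : IsPseudoDegree χ) : χ 0 = ⊥ := (hχ.1 0).2 rfl

lemma map_ne_bot (hχ : IsPseudoDegree χ) {x : S} (hx : x ≠ 0) : χ x ≠ ⊥ :=
  fun h => hx ((hχ.1 x).1 h)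

lemma map_one [Nontrivial S] (hχ : IsPseudoDegree χ) : χ 1 = 0 := by
  obtain ⟨z, hz⟩ := WithBot.ne_bot_iff_exists.1 (hχ.map_ne_bot (one_ne_zero : (1 : S) ≠ 0))
  have h := hχ.2.1 1 1
  rw [one_mul, ← hz] at h
  have hz0 : z = 0 := by
    have : z = z + z := by exact_mod_cast h
    omega
  rw [← hz, hz0]
  rfl

lemma map_sum_lt (hχ : IsPseudoDegree χ) {ι : Type*} {s : Finset ι} {f : ι → S}
    {n : WithBot ℤ} (hn : ⊥ < n) (h : ∀ i ∈ s, χ (f i) < n) : χ (∑ i ∈ s, f i) < n :=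
  Finset.sum_induction f (fun x => χ x < n) (fun x y hx hy => (hχ.2.2 x y).trans_lt (max_lt hx hy))
    (by rwa [hχ.map_zero]) h

variable [SMulCommClass K S S] [IsScalarTower K S S] [Nontrivial S]

lemma map_smul_one (hχ : IsPseudoDegree χ) (hK : ∀ κ : K, κ ≠ 0 → 0 ≤ χ (κ • (1 : S)))
    {κ : K} (hκ : κ ≠ 0) : χ (κ • (1 : S)) = 0 := by
  have hsum : χ (κ • (1 : S)) + χ (κ⁻¹ • (1 : S)) = 0 := by
    rw [← hχ.2.1, smul_mul_smul_comm, mul_inv_cancel₀ hκ, one_smul, one_mul, hχ.map_one]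
  exact ((add_eq_zero_iff_of_nonneg (hK κ hκ) (hK κ⁻¹ (inv_ne_zero hκ))).1 hsum).1

lemma map_smul (hχ : IsPseudoDegree χ) (hK : ∀ κ : K, κ ≠ 0 → 0 ≤ χ (κ • (1 : S)))
    {κ : K} (hκ : κ ≠ 0) (x : S) : χ (κ • x) = χ x := by
  rw [← smul_one_mul, hχ.2.1, hχ.map_smul_one hK hκ, zero_add]

lemma map_smul_le (hχ : IsPseudoDegree χ) (hK : ∀ κ : K, κ ≠ 0 → 0 ≤ χ (κ • (1 : S)))
    (κ : K) (x : S) : χ (κ • x) ≤ χ x := by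
  rcases eq_or_ne κ 0 with rfl | hκ
  · simp [hχ.map_zero]
  · rw [hχ.map_smul hK hκ]

lemma map_add_of_lt (hχ : IsPseudoDegree χ) (hK : ∀ κ : K, κ ≠ 0 → 0 ≤ χ (κ • (1 : S)))
    {x y : S} (h : χ y < χ x) : χ (x + y) = χ x := by
  have hneg : χ (-y) = χ y := by
    rw [← neg_one_smul K y, hχ.map_smul hK (neg_ne_zero.2 one_ne_zero)]
  refine le_antisymm ((hχ.2.2 x y).trans (max_eq_left h.le).le) ?_
  have := hχ.2.2 (x + y) (-y)
  rw [add_neg_cancel_right, hneg] at this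
  exact (le_max_iff.1 this).resolve_right h.not_ge

lemma map_sum_of_lt (hχ : IsPseudoDegree χ) (hK : ∀ κ : K, κ ≠ 0 → 0 ≤ χ (κ • (1 : S)))
    {ι : Type*} [DecidableEq ι] {s : Finset ι} {f : ι → S} {j : ι} (hj : j ∈ s)
    (hbot : ⊥ < χ (f j)) (h : ∀ i ∈ s, i ≠ j → χ (f i) < χ (f j)) :
    χ (∑ i ∈ s, f i) = χ (f j) := by
  rw [← Finset.add_sum_erase s f hj]
  exact hχ.map_add_of_lt hK
    (hχ.map_sum_lt hbot fun i hi => h i (Finset.mem_of_mem_erase hi) (Finset.ne_of_mem_erase hi))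

lemma map_apow (hχ : IsPseudoDegree χ) {a : S} {m : ℤ} (hm : χ a = m) (n : ℕ) :
    χ (apow a n) = (n * m : ℤ) := by
  induction n with
  | zero => simpa [apow] using hχ.map_one
  | succ n ih =>
    rw [apow, hχ.2.1, hm, ih, ← WithBot.coe_add]
    congr 1
    push_cast
    ring

lemma map_evalAt (hχ : IsPseudoDegree χ) (hK : ∀ κ : K, κ ≠ 0 → 0 ≤ χ (κ • (1 : S)))
    {a : S} {m : ℤ} (hm : χ a = m) (hm0 : 0 < m) {p : K[X]} (hp : p ≠ 0) :
    χ (evalAt a p) = (p.natDegree * m : ℤ) := by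
  classical
  have hterm : ∀ i ∈ p.support, χ (p.coeff i • apow a i) = (i * m : ℤ) := fun i hi => by
    rw [hχ.map_smul hK (mem_support_iff.1 hi), hχ.map_apow hm]
  have hdeg := natDegree_mem_support_of_nonzero hp
  rw [evalAt, Polynomial.sum_def, hχ.map_sum_of_lt hK hdeg, hterm _ hdeg]
  · rw [hterm _ hdeg]
    exact WithBot.bot_lt_coe _
  · intro i hi hne
    rw [hterm _ hi, hterm _ hdeg, WithBot.coe_lt_coe]
    exact mul_lt_mul_of_pos_right
      (by exact_mod_cast (le_natDegree_of_mem_supp i hi).lt_of_ne hne) hm0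

end IsPseudoDegree

section Centralizer

variable [SMulCommClass K S S] [IsScalarTower K S S] {a : S}

variable (K) in
def centralizerSubmodule (a : S) : Submodule K S where
  carrier := centralizer a
  add_mem' {x y} (hx : a * x = x * a) (hy : a * y = y * a) := by
    show a * (x + y) = (x + y) * a
    rw [mul_add, add_mul, hx, hy]
  zero_mem' := show a * 0 = 0 * a by simp
  smul_mem' κ x (hx : a * x = x * a) := by
    show a * (κ • x) = κ • x * a
    rw [mul_smul_comm, smul_mul_assoc, hx]

lemma smul_one_mem_centralizer (κ : K) : κ • (1 : S) ∈ centralizer a :=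
  (centralizerSubmodule K a).smul_mem κ (show a * 1 = 1 * a by simp)

def mulLeftCentralizer (ha : a ∈ nucleus S) : Module.End K (centralizerSubmodule K a) :=
  (LinearMap.mulLeft K a).restrict fun _ hc => mul_mem_centralizer_of_mem_nucleus ha hc

variable (K) in
/-- `C_S(a)` as a `K[x]`-module, `x` acting by left multiplication by `a`. -/
abbrev CentralizerModule (ha : a ∈ nucleus S) : Type _ := AEval' (mulLeftCentralizer (K := K) ha)

namespace CentralizerModule

variable {ha : a ∈ nucleus S}

def val (ha : a ∈ nucleus S) : CentralizerModule K ha →ₗ[K] S :=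
  (centralizerSubmodule K a).subtype ∘ₗ (AEval'.of _).symm.toLinearMap

lemma val_injective : Function.Injective (val (K := K) ha) :=
  Subtype.val_injective.comp (AEval'.of _).symm.injective

lemma val_mem (x : CentralizerModule K ha) : val ha x ∈ centralizer a :=
  ((AEval'.of _).symm x).2

lemma exists_val_eq {c : S} (hc : c ∈ centralizer a) :
    ∃ x : CentralizerModule K ha, val ha x = c :=
  ⟨AEval'.of _ ⟨c, hc⟩, rfl⟩

lemma val_X_smul (x : CentralizerModule K ha) : val ha ((X : K[X]) • x) = a * val ha x := by
  obtain ⟨y, rfl⟩ := (AEval'.of (mulLeftCentralizer ha)).surjective x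
  rw [AEval'.X_smul_of]
  rfl

lemma val_X_pow_smul (n : ℕ) (x : CentralizerModule K ha) :
    val ha ((X : K[X]) ^ n • x) = apow a n * val ha x := by
  induction n with
  | zero => simp [apow]
  | succ n ih => rw [pow_succ', mul_smul, val_X_smul, ih, ha.1]; rfl

lemma val_smul (p : K[X]) (x : CentralizerModule K ha) :
    val ha (p • x) = evalAt a p * val ha x := by
  induction p using Polynomial.induction_on' with
  | add p q hp hq => rw [add_smul, map_add, hp, hq, evalAt_add, add_mul]
  | monomial n r =>
    rw [evalAt_monomial, ← C_mul_X_pow_eq_monomial, mul_smul, AEval.C_smul, map_smul,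
      val_X_pow_smul, smul_mul_assoc]

lemma val_sum_smul {k : ℕ} (φ : Fin k → K[X]) (v : Fin k → CentralizerModule K ha) :
    val ha (∑ i, φ i • v i) = ∑ i, evalAt a (φ i) * val ha (v i) := by
  simp only [map_sum, val_smul]

end CentralizerModule

end Centralizer

section Filtration

variable {χ : S → WithBot ℤ} {a : S} {ℓ : ℕ}

variable (K) in
/-- The filtration `V n = {c ∈ C_S(a) : χ c ≤ n}`, written as a span so that it is a subspace by
construction; `mem_centralizerFiltration` recovers the set. -/
def centralizerFiltration (χ : S → WithBot ℤ) (a : S) (n : ℤ) : Submodule K S :=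
  Submodule.span K {c | c ∈ centralizer a ∧ χ c ≤ n}

local notation "V" => centralizerFiltration K χ a

lemma centralizerFiltration_mono : Monotone V := fun _ _ h =>
  Submodule.span_mono fun _ hc => ⟨hc.1, hc.2.trans (by exact_mod_cast h)⟩

variable [SMulCommClass K S S]

lemma IsPseudoDegree.mulLeft_injective (hχ : IsPseudoDegree χ) (ha0 : a ≠ 0) :
    Function.Injective (LinearMap.mulLeft K a) := by
  refine (injective_iff_map_eq_zero _).2 fun x hx => ?_
  have h := hχ.2.1 a x
  rw [← LinearMap.mulLeft_apply (R := K), hx, hχ.map_zero] at h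
  exact (hχ.1 x).1 ((WithBot.add_eq_bot.1 h.symm).resolve_left (hχ.map_ne_bot ha0))

variable [IsScalarTower K S S] [Nontrivial S]

lemma CondD.smul_one_nonneg (hD : CondD K χ (centralizer a) ℓ) (κ : K) (hκ : κ ≠ 0) :
    0 ≤ χ (κ • (1 : S)) :=
  hD.1 _ (smul_one_mem_centralizer κ) (smul_ne_zero hκ one_ne_zero)

lemma mem_centralizerFiltration (hχ : IsPseudoDegree χ) (hD : CondD K χ (centralizer a) ℓ)
    {n : ℤ} {c : S} :
    c ∈ V n ↔ c ∈ centralizer a ∧ χ c ≤ n := by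
  refine ⟨fun hc => ?_, fun hc => Submodule.subset_span hc⟩
  induction hc using Submodule.span_induction with
  | mem x hx => exact hx
  | zero => exact ⟨(centralizerSubmodule K a).zero_mem, by simp [hχ.map_zero]⟩
  | add x y _ _ hx hy =>
    exact ⟨(centralizerSubmodule K a).add_mem hx.1 hy.1, (hχ.2.2 x y).trans (max_le hx.2 hy.2)⟩
  | smul κ x _ hx =>
    exact ⟨(centralizerSubmodule K a).smul_mem κ hx.1,
      (hχ.map_smul_le hD.smul_one_nonneg κ x).trans hx.2⟩

lemma centralizerFiltration_eq_bot (hχ : IsPseudoDegree χ) (hD : CondD K χ (centralizer a) ℓ)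
    {n : ℤ} (hn : n < 0) : V n = ⊥ := by
  refine (Submodule.eq_bot_iff _).2 fun c hc => ?_
  rw [mem_centralizerFiltration hχ hD] at hc
  by_contra hc0
  have : (0 : WithBot ℤ) ≤ n := (hD.1 c hc.1 hc0).trans hc.2
  exact hn.not_ge (by exact_mod_cast this)

lemma exists_mem_centralizerFiltration (hχ : IsPseudoDegree χ)
    (hD : CondD K χ (centralizer a) ℓ) {c : S} (hc : c ∈ centralizer a) :
    ∃ n : ℕ, c ∈ V n := by
  rcases eq_or_ne c 0 with rfl | hc0
  · exact ⟨0, zero_mem _⟩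
  obtain ⟨z, hz⟩ := WithBot.ne_bot_iff_exists.1 (hχ.map_ne_bot hc0)
  have hz0 : (0 : WithBot ℤ) ≤ z := hz ▸ hD.1 c hc hc0
  refine ⟨z.toNat, (mem_centralizerFiltration hχ hD).2 ⟨hc, ?_⟩⟩
  rw [← hz]
  exact_mod_cast Int.self_le_toNat z

lemma exists_sum_smul_mem_centralizerFiltration (hχ : IsPseudoDegree χ)
    (hD : CondD K χ (centralizer a) ℓ) (n : ℤ) (f : Fin (ℓ + 1) → V n) :
    ∃ c : Fin (ℓ + 1) → K, c ≠ 0 ∧ ∑ i, c i • (f i : S) ∈ V (n - 1) := by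
  classical
  by_cases hlow : ∃ i, (f i : S) ∈ V (n - 1)
  · obtain ⟨i, hi⟩ := hlow
    refine ⟨Pi.single i 1, fun h => one_ne_zero (α := K) (by simpa using congrFun h i), ?_⟩
    simpa [Pi.single_apply] using hi
  push Not at hlow
  have hf i := (mem_centralizerFiltration hχ hD).1 (f i).2
  have hχf (i) : χ (f i) = n := by
    refine le_antisymm (hf i).2 (not_lt.1 fun hlt => hlow i ?_)
    exact (mem_centralizerFiltration hχ hD).2 ⟨(hf i).1, WithBot.le_coe_sub_one_iff.2 hlt⟩
  obtain ⟨c, ⟨i, hi⟩, hlt⟩ := hD.2 (fun i => f i) n (fun i => (hf i).1) hχf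
  refine ⟨c, fun h => hi (congrFun h i), (mem_centralizerFiltration hχ hD).2
    ⟨?_, WithBot.le_coe_sub_one_iff.2 hlt⟩⟩
  exact (centralizerSubmodule K a).sum_mem fun i _ =>
    (centralizerSubmodule K a).smul_mem (c i) (hf i).1

lemma finrank_centralizerFiltration_le_add (hχ : IsPseudoDegree χ)
    (hD : CondD K χ (centralizer a) ℓ) (n : ℤ) [FiniteDimensional K (V (n - 1))] :
    FiniteDimensional K (V n) ∧ finrank K (V n) ≤ finrank K (V (n - 1)) + ℓ :=
  Submodule.finrank_le_finrank_add_of_exists_sum_mem (centralizerFiltration_mono (by omega))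
    (exists_sum_smul_mem_centralizerFiltration hχ hD n)

lemma finiteDimensional_centralizerFiltration (hχ : IsPseudoDegree χ)
    (hD : CondD K χ (centralizer a) ℓ) (n : ℤ) : FiniteDimensional K (V n) := by
  have hnat : ∀ k : ℕ, FiniteDimensional K (V (k - 1)) := by
    intro k
    induction k with
    | zero =>
      rw [centralizerFiltration_eq_bot hχ hD (n := (0 : ℕ) - 1) (by norm_num)]
      infer_instance
    | succ k ih =>
      have := (finrank_centralizerFiltration_le_add hχ hD k).1
      rwa [Nat.cast_succ, add_sub_cancel_right]
  have := hnat (n + 1).toNat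
  exact Submodule.finiteDimensional_of_le
    (centralizerFiltration_mono (show n ≤ ((n + 1).toNat : ℤ) - 1 by omega))

lemma finrank_centralizerFiltration_le (hχ : IsPseudoDegree χ)
    (hD : CondD K χ (centralizer a) ℓ) (n : ℕ) : finrank K (V n) ≤ ℓ * (n + 1) := by
  have := finiteDimensional_centralizerFiltration hχ hD
  induction n with
  | zero =>
    have := (finrank_centralizerFiltration_le_add hχ hD 0).2
    rw [centralizerFiltration_eq_bot hχ hD (n := 0 - 1) (by norm_num), finrank_bot] at this
    simpa using this
  | succ n ih =>
    have := (finrank_centralizerFiltration_le_add hχ hD (n + 1)).2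
    rw [add_sub_cancel_right] at this
    push_cast
    linarith

lemma sup_map_mulLeft_le (hχ : IsPseudoDegree χ) (hD : CondD K χ (centralizer a) ℓ)
    (ha : a ∈ nucleus S) {m : ℤ} (hm : χ a = m) (n : ℤ) :
    V (n + m - 1) ⊔ (V n).map (LinearMap.mulLeft K a) ≤ V (n + m) := by
  refine sup_le (centralizerFiltration_mono (by omega)) ?_
  rintro _ ⟨c, hc, rfl⟩
  rw [SetLike.mem_coe, mem_centralizerFiltration hχ hD] at hc
  refine (mem_centralizerFiltration hχ hD).2 ⟨mul_mem_centralizer_of_mem_nucleus ha hc.1, ?_⟩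
  rw [LinearMap.mulLeft_apply, hχ.2.1, hm, add_comm n, WithBot.coe_add]
  gcongr
  exact hc.2

lemma inf_map_mulLeft_le (hχ : IsPseudoDegree χ) (hD : CondD K χ (centralizer a) ℓ)
    {m : ℤ} (hm : χ a = m) (n : ℤ) :
    V (n + m - 1) ⊓ (V n).map (LinearMap.mulLeft K a) ≤
      (V (n - 1)).map (LinearMap.mulLeft K a) := by
  rintro _ ⟨hx, c, hc, rfl⟩
  rw [SetLike.mem_coe, mem_centralizerFiltration hχ hD] at hx hc
  refine ⟨c, (mem_centralizerFiltration hχ hD).2 ⟨hc.1, ?_⟩, rfl⟩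
  rw [LinearMap.mulLeft_apply, hχ.2.1, hm,
    show n + m - 1 = m + (n - 1) by ring, WithBot.coe_add] at hx
  exact (WithBot.add_le_add_iff_left WithBot.coe_ne_bot).1 hx.2

lemma finrank_add_finrank_le_finrank_sup_map_mulLeft (hχ : IsPseudoDegree χ)
    (hD : CondD K χ (centralizer a) ℓ) {m : ℤ} (hm : χ a = m) (ha0 : a ≠ 0) (n : ℤ) :
    finrank K (V n) + finrank K (V (n + m - 1)) ≤
      finrank K ↥(V (n + m - 1) ⊔ (V n).map (LinearMap.mulLeft K a)) + finrank K (V (n - 1)) := by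
  have := finiteDimensional_centralizerFiltration hχ hD
  have hmap : ∀ q, finrank K ((V q).map (LinearMap.mulLeft K a)) = finrank K (V q) := fun q =>
    (Submodule.equivMapOfInjective _ (hχ.mulLeft_injective ha0) (V q)).finrank_eq.symm
  have hinf := Submodule.finrank_mono (inf_map_mulLeft_le hχ hD hm n)
  have hsum :=
    Submodule.finrank_sup_add_finrank_inf_eq (V (n + m - 1)) ((V n).map (LinearMap.mulLeft K a))
  rw [hmap] at hinf hsum
  omega

theorem eventually_centralizerFiltration_eq_sup (hχ : IsPseudoDegree χ)
    (hD : CondD K χ (centralizer a) ℓ) (ha : a ∈ nucleus S) {m : ℕ} (hm : χ a = (m : ℤ))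
    (ha0 : a ≠ 0) :
    ∀ᶠ n : ℕ in atTop, V (n + m) = V (n + m - 1) ⊔ (V n).map (LinearMap.mulLeft K a) := by
  have := finiteDimensional_centralizerFiltration hχ hD
  have hmono : ∀ p q : ℤ, p ≤ q → finrank K (V p) ≤ finrank K (V q) := fun p q h =>
    Submodule.finrank_mono (centralizerFiltration_mono h)
  have hsup : ∀ n : ℤ, finrank K ↥(V (n + m - 1) ⊔ (V n).map (LinearMap.mulLeft K a)) ≤
      finrank K (V (n + m)) := fun n => Submodule.finrank_mono (sup_map_mulLeft_le hχ hD ha hm n)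
  have hgrowth := finrank_add_finrank_le_finrank_sup_map_mulLeft hχ hD hm ha0
  -- `d n` is the dimension of the graded piece `V n / V (n - 1)`
  set d : ℕ → ℕ := fun n => finrank K (V n) - finrank K (V (n - 1))
  have hd : ∀ n, d n ≤ d (n + m) := fun n => by
    have := hgrowth n; have := hsup n
    have := hmono (n - 1) n (by omega); have := hmono (n + m - 1) (n + m) (by omega)
    dsimp only [d]
    push_cast
    omega
  have hdℓ : ∀ n, d n ≤ ℓ := fun n => by
    have := (finrank_centralizerFiltration_le_add hχ hD n).2
    simp only [d]
    omega
  filter_upwards [eventually_map_add_eq_of_map_le_map_add hd hdℓ] with n hn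
  refine (Submodule.eq_of_le_of_finrank_le (sup_map_mulLeft_le hχ hD ha hm n) ?_).symm
  have := hgrowth n
  have := hmono (n - 1) n (by omega); have := hmono (n + m - 1) (n + m) (by omega)
  dsimp only [d] at hn
  push_cast at hn
  omega

namespace CentralizerModule

lemma exists_span_comap_centralizerFiltration_eq_top (hχ : IsPseudoDegree χ)
    (hD : CondD K χ (centralizer a) ℓ) (ha : a ∈ nucleus S) {m : ℕ} (hm : χ a = (m : ℤ))
    (hm0 : 0 < m) :
    ∃ N : ℕ, Submodule.span K[X]
      ((V N).comap (val (K := K) ha) : Set (CentralizerModule K ha)) = ⊤ := by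
  have ha0 : a ≠ 0 := fun h => by simp [h, hχ.map_zero] at hm
  obtain ⟨N, hN⟩ := eventually_atTop.1 (eventually_centralizerFiltration_eq_sup hχ hD ha hm ha0)
  set P := Submodule.span K[X]
    ((V (N + m : ℕ)).comap (val (K := K) ha) : Set (CentralizerModule K ha))
  suffices hP : ∀ k : ℕ, ∀ x, val ha x ∈ V k → x ∈ P from
    ⟨N + m, eq_top_iff.2 fun x _ =>
      let ⟨k, hk⟩ := exists_mem_centralizerFiltration hχ hD (val_mem x)
      hP k x hk⟩
  intro k
  induction k using Nat.strong_induction_on with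
  | _ k ih =>
  intro x hx
  by_cases hk : k ≤ N + m
  · exact Submodule.subset_span (centralizerFiltration_mono (by exact_mod_cast hk) hx)
  obtain ⟨n, rfl⟩ : ∃ n, k = n + m := ⟨k - m, by omega⟩
  rw [Nat.cast_add, hN n (by omega)] at hx
  obtain ⟨y, hy, _, ⟨z, hz, rfl⟩, hyz⟩ := Submodule.mem_sup.1 hx
  obtain ⟨y, rfl⟩ := exists_val_eq (K := K) (ha := ha) ((mem_centralizerFiltration hχ hD).1 hy).1
  obtain ⟨z, rfl⟩ := exists_val_eq (K := K) (ha := ha) ((mem_centralizerFiltration hχ hD).1 hz).1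
  obtain rfl : x = y + (X : K[X]) • z := val_injective (by rw [map_add, val_X_smul, ← hyz]; rfl)
  refine P.add_mem (ih (n + m - 1) (by omega) y ?_) (P.smul_mem X (ih n (by omega) z hz))
  rwa [show ((n + m - 1 : ℕ) : ℤ) = n + m - 1 by omega]

theorem finite (hχ : IsPseudoDegree χ) (hD : CondD K χ (centralizer a) ℓ) (ha : a ∈ nucleus S)
    {m : ℕ} (hm : χ a = (m : ℤ)) (hm0 : 0 < m) :
    Module.Finite K[X] (CentralizerModule K ha) := by
  obtain ⟨N, hN⟩ := exists_span_comap_centralizerFiltration_eq_top hχ hD ha hm hm0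
  have := finiteDimensional_centralizerFiltration hχ hD N
  have : FiniteDimensional K ((V N).comap (val (K := K) ha)) :=
    .of_injective ((val ha).submoduleComap (V N)) fun x y h => by
      have h' := congrArg Subtype.val h
      exact Subtype.ext (val_injective h')
  obtain ⟨t, ht⟩ := (Submodule.fg_iff_finiteDimensional _).2 this
  exact ⟨⟨t, by rw [← Submodule.span_span_of_tower K, ht, hN]⟩⟩

theorem isTorsionFree (hχ : IsPseudoDegree χ) (hD : CondD K χ (centralizer a) ℓ)
    (ha : a ∈ nucleus S) {m : ℤ} (hm : χ a = m) (hm0 : 0 < m) :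
    IsTorsionFree K[X] (CentralizerModule K ha) := by
  refine .of_smul_eq_zero fun p x h => or_iff_not_imp_left.2 fun hp => val_injective ?_
  have hmul := hχ.2.1 (evalAt a p) (val ha x)
  rw [← val_smul, h, map_zero, hχ.map_zero, hχ.map_evalAt hD.smul_one_nonneg hm hm0 hp] at hmul
  rw [map_zero, ← hχ.1]
  exact (WithBot.add_eq_bot.1 hmul.symm).resolve_left WithBot.coe_ne_bot

lemma val_X_pow_smul_mem_centralizerFiltration (hχ : IsPseudoDegree χ)
    (hD : CondD K χ (centralizer a) ℓ) {ha : a ∈ nucleus S} {m : ℤ} (hm : χ a = m)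
    {x : CentralizerModule K ha} {n : ℤ} (hx : val ha x ∈ V n) (j : ℕ) :
    val ha ((X : K[X]) ^ j • x) ∈ V (n + j * m) := by
  refine (mem_centralizerFiltration hχ hD).2 ⟨val_mem _, ?_⟩
  rw [val_X_pow_smul, hχ.2.1, hχ.map_apow hm, add_comm n, WithBot.coe_add]
  gcongr
  exact ((mem_centralizerFiltration hχ hD).1 hx).2

theorem card_le_of_linearIndependent (hχ : IsPseudoDegree χ) (hD : CondD K χ (centralizer a) ℓ)
    (ha : a ∈ nucleus S) {m : ℕ} (hm : χ a = (m : ℤ)) {ι : Type*} [Fintype ι]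
    {v : ι → CentralizerModule K ha} (hv : LinearIndependent K[X] v) :
    Fintype.card ι ≤ ℓ * m := by
  choose n hn using fun i => exists_mem_centralizerFiltration hχ hD (val_mem (v i))
  set B := Finset.univ.sup n
  refine le_of_forall_succ_mul_le (c := ℓ * (B + 1)) fun M => ?_
  -- the `K`-independent vectors `aʲ vᵢ` with `j ≤ M` all lie in `V (B + M m)`
  have hX : LinearIndependent K fun j : Fin (M + 1) => (X : K[X]) ^ (j : ℕ) := by
    have := (basisMonomials K).linearIndependent.comp _ (Fin.val_injective (n := M + 1))
    convert this using 1
    ext j : 1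
    simp [X_pow_eq_monomial]
  have hli := linearIndependent_smul hX hv
  have hF (p : Fin (M + 1) × ι) : val ha ((X : K[X]) ^ (p.1 : ℕ) • v p.2) ∈ V (B + M * m : ℕ) := by
    refine centralizerFiltration_mono ?_
      (val_X_pow_smul_mem_centralizerFiltration hχ hD hm (hn p.2) p.1)
    have := Finset.le_sup (f := n) (Finset.mem_univ p.2)
    have := p.1.2
    push_cast
    nlinarith
  have hcard : (M + 1) * Fintype.card ι ≤ finrank K (V (B + M * m : ℕ)) := by
    have := finiteDimensional_centralizerFiltration hχ hD (B + M * m : ℕ)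
    have hli' : LinearIndependent K fun p => (⟨_, hF p⟩ : V (B + M * m : ℕ)) :=
      LinearIndependent.of_comp (V _).subtype
        (hli.map' (val ha) (LinearMap.ker_eq_bot.2 val_injective))
    simpa using hli'.fintype_card_le_finrank
  calc _ ≤ ℓ * (B + M * m + 1) := hcard.trans (finrank_centralizerFiltration_le hχ hD _)
    _ = M * (ℓ * m) + ℓ * (B + 1) := by ring

end CentralizerModule

end Filtration

end

theorem centralizer_free_of_condD_general {K S : Type*} [Field K] [NonAssocRing S]
    [Module K S] [SMulCommClass K S S] [IsScalarTower K S S]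
    (χ : S → WithBot ℤ) (hχ : IsPseudoDegree χ)
    (a : S) (ha : a ∈ nucleus S) (m : ℕ) (hm : χ a = (m : ℤ)) (hmpos : 0 < m)
    (ℓ : ℕ) (hD : CondD K χ (centralizer a) ℓ) :
    ∃ (k : ℕ), k ≤ ℓ * m ∧ ∃ b : Fin k → S, (∀ i, b i ∈ centralizer a) ∧
      ∀ c ∈ centralizer a,
        ∃! φ : Fin k → Polynomial K, c = ∑ i, evalAt (a := a) (φ i) * b i := by
  have : Nontrivial S := ⟨⟨a, 0, fun h => by simp [h, hχ.map_zero] at hm⟩⟩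
  have := CentralizerModule.finite hχ hD ha hm hmpos
  have := CentralizerModule.isTorsionFree hχ hD ha hm (by exact_mod_cast hmpos)
  let e := Module.finBasis K[X] (CentralizerModule K ha)
  refine ⟨_, ?_, fun i => CentralizerModule.val ha (e i), fun i => CentralizerModule.val_mem _,
    fun c hc => ?_⟩
  · simpa using CentralizerModule.card_le_of_linearIndependent hχ hD ha hm e.linearIndependent
  obtain ⟨x, rfl⟩ := CentralizerModule.exists_val_eq (K := K) (ha := ha) hc
  simpa only [← CentralizerModule.val_sum_smul, ← e.equivFun_symm_apply,
    CentralizerModule.val_injective.eq_iff, eq_comm] using e.equivFun.symm.bijective.existsUnique x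

/-- Let `S` be a `K`-algebra with pseudo-degree function `χ`, let `a` be in the nucleus
of `S` with `m = χ a > 0`, and suppose the centralizer `C_S(a)` satisfies condition
`D(ℓ)`.  Then `C_S(a)` is a free left `K[a]`-module of rank at most `ℓ·m`: there are
`k ≤ ℓ·m` elements `b₁, …, b_k` of `C_S(a)` such that every element of `C_S(a)` is a
unique left `K[a]`-linear combination `Σ φᵢ(a)·bᵢ` with `φᵢ ∈ K[x]`. -/
theorem centralizer_free_of_condD {K S : Type*} [Field K] [NonAssocRing S]
    [Module K S] [SMulCommClass K S S] [IsScalarTower K S S]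
    (χ : S → WithBot ℤ) (hχ : IsPseudoDegree χ)
    (a : S) (ha : a ∈ nucleus S) (m : ℕ) (hm : χ a = (m : ℤ)) (hmpos : 0 < m)
    (ℓ : ℕ) (hℓ : 0 < ℓ) (hD : CondD K χ (centralizer a) ℓ) :
    ∃ (k : ℕ), k ≤ ℓ * m ∧ ∃ b : Fin k → S, (∀ i, b i ∈ centralizer a) ∧
      ∀ c ∈ centralizer a,
        ∃! φ : Fin k → Polynomial K, c = ∑ i, evalAt (a := a) (φ i) * b i :=
  centralizer_free_of_condD_general χ hχ a ha m hm hmpos ℓ hD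
end

section
/- Let R = 𝕆[y] be the polynomial ring over the octonions, σ an ℝ-algebra endomorphism of R with deg_y(σ(y)) > 1, δ a σ-derivation, and S = R[x; σ, δ] the non-associative Ore extension. If a ∈ S has positive degree in x and all its coefficients lie in ℝ[y], then a belongs to the nucleus N(S). -/
/-- The octonions, realized via the Cayley–Dickson doubling of the real quaternions. -/
def Octonion : Type := Quaternion ℝ × Quaternion ℝ

noncomputable instance : AddCommGroup Octonion :=
  inferInstanceAs (AddCommGroup (Quaternion ℝ × Quaternion ℝ))

noncomputable instance : Module ℝ Octonion :=
  inferInstanceAs (Module ℝ (Quaternion ℝ × Quaternion ℝ))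

/-- Cayley–Dickson multiplication on pairs of quaternions. -/
noncomputable def Octonion.omul (a b : Quaternion ℝ × Quaternion ℝ) :
    Quaternion ℝ × Quaternion ℝ :=
  (a.1 * b.1 - star b.2 * a.2, b.2 * a.1 + a.2 * star b.1)

noncomputable instance : One Octonion := ⟨((1 : Quaternion ℝ), (0 : Quaternion ℝ))⟩

theorem Octonion.omul_add (a b c : Quaternion ℝ × Quaternion ℝ) :
    Octonion.omul a (b + c) = Octonion.omul a b + Octonion.omul a c := by
  unfold Octonion.omul
  refine Prod.ext ?_ ?_ <;>
    simp only [Prod.fst_add, Prod.snd_add, mul_add, add_mul, star_add] <;> abel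

theorem Octonion.add_omul (a b c : Quaternion ℝ × Quaternion ℝ) :
    Octonion.omul (a + b) c = Octonion.omul a c + Octonion.omul b c := by
  unfold Octonion.omul
  refine Prod.ext ?_ ?_ <;>
    simp only [Prod.fst_add, Prod.snd_add, mul_add, add_mul, star_add] <;> abel

theorem Octonion.zero_omul (a : Quaternion ℝ × Quaternion ℝ) :
    Octonion.omul 0 a = 0 := by
  unfold Octonion.omul; refine Prod.ext ?_ ?_ <;> simp

theorem Octonion.omul_zero (a : Quaternion ℝ × Quaternion ℝ) :
    Octonion.omul a 0 = 0 := by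
  unfold Octonion.omul; refine Prod.ext ?_ ?_ <;> simp

noncomputable instance : NonUnitalNonAssocRing Octonion :=
  { (inferInstanceAs (AddCommGroup Octonion) : AddCommGroup Octonion) with
    mul := Octonion.omul
    left_distrib := fun a b c => Octonion.omul_add a b c
    right_distrib := fun a b c => Octonion.add_omul a b c
    zero_mul := fun a => Octonion.zero_omul a
    mul_zero := fun a => Octonion.omul_zero a }

/-- `R = 𝕆[y]`, the polynomial ring over the octonions, as finitely supported
sequences of octonion coefficients. -/
noncomputable abbrev OctPoly : Type := ℕ →₀ Octonion

/-- The convolution product on `𝕆[y]`. -/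
noncomputable instance : Mul OctPoly :=
  ⟨fun p q => p.sum fun i a => q.sum fun j b => Finsupp.single (i + j) (a * b)⟩

theorem OctPoly.mul_zero (a : OctPoly) : a * (0 : OctPoly) = 0 := by
  show (Finsupp.sum a fun i c => Finsupp.sum 0 fun j b => Finsupp.single (i + j) (c * b)) = 0
  simp

/-- The variable `y` of `𝕆[y]`. -/
noncomputable def Yv : OctPoly := Finsupp.single 1 (1 : Octonion)

/-- The constant polynomial `1` of `𝕆[y]`. -/
noncomputable def oneR : OctPoly := Finsupp.single 0 (1 : Octonion)

/-- The `y`-degree of a polynomial in `𝕆[y]` (with junk value `0` at `0`). -/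
def degy (r : OctPoly) : ℕ := WithBot.unbotD 0 (r.support.max)

/-- The underlying additive group of the Ore extension `S = R[x; σ, δ]`:
finitely supported sequences of coefficients in `R = 𝕆[y]`. -/
noncomputable abbrev OrePoly : Type := ℕ →₀ OctPoly

/-- Left multiplication by `x` in `R[x; σ, δ]`, determined by
`x·(r xʲ) = σ(r) x^(j+1) + δ(r) xʲ`. -/
noncomputable def xmul (σ δ : OctPoly →+ OctPoly) : OrePoly →+ OrePoly :=
  Finsupp.liftAddHom fun j =>
    (Finsupp.singleAddHom (j + 1)).comp σ + (Finsupp.singleAddHom j).comp δ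

/-- The multiplication of the non-associative Ore extension `R[x; σ, δ]`:
`(Σᵢ aᵢ xⁱ)·q = Σᵢ aᵢ·(xⁱ·q)`, where `xⁱ` acts via iterated `xmul` and `aᵢ`
multiplies every coefficient from the left. -/
noncomputable def oreMul (σ δ : OctPoly →+ OctPoly) (p q : OrePoly) : OrePoly :=
  p.sum fun i a => Finsupp.mapRange (a * ·) (OctPoly.mul_zero a) ((xmul σ δ)^[i] q)

/-- The constant `1 = 1·x⁰` of the Ore extension. -/
noncomputable def oneS : OrePoly := Finsupp.single 0 oneR

/-- The `x`-degree of an element of the Ore extension, valued in `ℤ ∪ {-∞}`. -/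
def xdeg (p : OrePoly) : WithBot ℤ := (p.support.max).map (Nat.cast : ℕ → ℤ)

/-- `σ` is a unital `ℝ`-algebra endomorphism of `𝕆[y]`. -/
def IsAlgEndo (σ : OctPoly →+ OctPoly) : Prop :=
  (∀ p q : OctPoly, σ (p * q) = σ p * σ q) ∧ σ oneR = oneR ∧
    (∀ (r : ℝ) (p : OctPoly), σ (r • p) = r • σ p)

/-- `δ` is a `σ`-derivation of `𝕆[y]`. -/
def IsSigmaDerivation (σ δ : OctPoly →+ OctPoly) : Prop :=
  (∀ p q : OctPoly, δ (p * q) = σ p * δ q + δ p * q) ∧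
    (∀ (r : ℝ) (p : OctPoly), δ (r • p) = r • δ p)

/-- An element of `𝕆` is real if it is a real multiple of `1`. -/
def Octonion.IsReal (c : Octonion) : Prop := ∃ r : ℝ, c = r • (1 : Octonion)

/-- Membership in the nucleus of the Ore extension `R[x; σ, δ]`. -/
def OreNucleus (σ δ : OctPoly →+ OctPoly) (a : OrePoly) : Prop :=
  (∀ b c : OrePoly, oreMul σ δ a (oreMul σ δ b c) = oreMul σ δ (oreMul σ δ a b) c) ∧
  (∀ b c : OrePoly, oreMul σ δ (oreMul σ δ b a) c = oreMul σ δ b (oreMul σ δ a c)) ∧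
  (∀ b c : OrePoly, oreMul σ δ (oreMul σ δ b c) a = oreMul σ δ b (oreMul σ δ c a))

/-!
Real octonions lie in the nucleus of `𝕆`, so `ℝ[y]` lies in the nucleus of `𝕆[y]`. The map `σ`
sends constants to constants, because a non-constant polynomial cannot satisfy a real quadratic
equation (`𝕆` has no nonzero nilpotents), and it is bijective on `𝕆`: `σ(e) σ(ē) = N(e)` makes
it injective, and `𝕆` is finite-dimensional. As `y` commutes with all constants, so does `σ y`,
and the centre of `𝕆` is `ℝ`, so `σ y ∈ ℝ[y]`. Applying `δ` to `(e y) v = e (y v)` likewise puts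
the coefficients of `δ y` in the middle nucleus of `𝕆`, which is `ℝ`, so `δ y ∈ ℝ[y]`. Hence `σ`,
`δ`, and therefore `x`, preserve `ℝ[y]`-coefficients. Finally `x (p q) = (x p) q`, so each of the
three associativity identities defining the nucleus reduces, monomial by monomial, to an
associativity in `𝕆[y]` with one factor in `ℝ[y]`.
-/

open scoped Quaternion
open Finsupp

def qmk (a b c d : ℝ) : ℍ[ℝ] := ⟨a, b, c, d⟩

@[simp] theorem qmk_re (a b c d : ℝ) : (qmk a b c d).re = a := rfl
@[simp] theorem qmk_imI (a b c d : ℝ) : (qmk a b c d).imI = b := rfl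
@[simp] theorem qmk_imJ (a b c d : ℝ) : (qmk a b c d).imJ = c := rfl
@[simp] theorem qmk_imK (a b c d : ℝ) : (qmk a b c d).imK = d := rfl

theorem Quaternion.eq_re_of_forall_mul_comm {p : ℍ[ℝ]} (h : ∀ s, s * p = p * s) :
    p = p.re := by
  have hi := congrArg (fun q : ℍ[ℝ] => (q.imJ, q.imK)) (h (qmk 0 1 0 0))
  have hj := congrArg (fun q : ℍ[ℝ] => q.imK) (h (qmk 0 0 1 0))
  simp only [Quaternion.imJ_mul, Quaternion.imK_mul, qmk_re, qmk_imI, qmk_imJ, qmk_imK,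
    zero_mul, mul_zero, one_mul, mul_one, zero_add, add_zero, zero_sub, sub_zero, sub_self,
    Prod.mk.injEq] at hi hj
  ext <;>
    simp only [Quaternion.re_coe, Quaternion.imI_coe, Quaternion.imJ_coe, Quaternion.imK_coe] <;>
    linarith

namespace Octonion

def mk (x y : ℍ[ℝ]) : Octonion := (x, y)

@[simp] theorem mk_fst (x y : ℍ[ℝ]) : (mk x y).1 = x := rfl
@[simp] theorem mk_snd (x y : ℍ[ℝ]) : (mk x y).2 = y := rfl

@[ext] theorem ext {a b : Octonion} (h1 : a.1 = b.1) (h2 : a.2 = b.2) : a = b := Prod.ext h1 h2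

theorem fst_mul (a b : Octonion) : (a * b).1 = a.1 * b.1 - star b.2 * a.2 := rfl
theorem snd_mul (a b : Octonion) : (a * b).2 = b.2 * a.1 + a.2 * star b.1 := rfl

@[simp] theorem one_fst : (1 : Octonion).1 = 1 := rfl
@[simp] theorem one_snd : (1 : Octonion).2 = 0 := rfl
@[simp] theorem zero_fst : (0 : Octonion).1 = 0 := rfl
@[simp] theorem zero_snd : (0 : Octonion).2 = 0 := rfl
@[simp] theorem add_fst (a b : Octonion) : (a + b).1 = a.1 + b.1 := rfl
@[simp] theorem add_snd (a b : Octonion) : (a + b).2 = a.2 + b.2 := rfl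
@[simp] theorem smul_fst (r : ℝ) (a : Octonion) : (r • a).1 = r • a.1 := rfl
@[simp] theorem smul_snd (r : ℝ) (a : Octonion) : (r • a).2 = r • a.2 := rfl

instance : FiniteDimensional ℝ Octonion :=
  inferInstanceAs (FiniteDimensional ℝ (ℍ[ℝ] × ℍ[ℝ]))

noncomputable instance : MulOneClass Octonion where
  one_mul a := by ext <;> simp [fst_mul, snd_mul]
  mul_one a := by ext <;> simp [fst_mul, snd_mul]

instance : IsScalarTower ℝ Octonion Octonion where
  smul_assoc r a b := by ext <;> simp [smul_eq_mul, fst_mul, snd_mul, smul_sub, smul_add]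

instance : SMulCommClass ℝ Octonion Octonion where
  smul_comm r a b := by ext <;> simp [smul_eq_mul, fst_mul, snd_mul, smul_sub, smul_add]

noncomputable def conj (a : Octonion) : Octonion := (star a.1, -a.2)

@[simp] theorem conj_fst (a : Octonion) : (conj a).1 = star a.1 := rfl
@[simp] theorem conj_snd (a : Octonion) : (conj a).2 = -a.2 := rfl

noncomputable def normSq (a : Octonion) : ℝ := Quaternion.normSq a.1 + Quaternion.normSq a.2

theorem normSq_eq_zero {a : Octonion} : normSq a = 0 ↔ a = 0 := by
  rw [normSq, add_eq_zero_iff_of_nonneg Quaternion.normSq_nonneg Quaternion.normSq_nonneg,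
    Quaternion.normSq_eq_zero, Quaternion.normSq_eq_zero]
  exact ⟨fun h => ext h.1 h.2, fun h => by simp [h]⟩

protected theorem one_ne_zero : (1 : Octonion) ≠ 0 := fun h =>
  one_ne_zero (congrArg Prod.fst h : (1 : ℍ[ℝ]) = 0)

theorem smul_one_eq_zero {r : ℝ} : r • (1 : Octonion) = 0 ↔ r = 0 := by
  simp [smul_eq_zero, Octonion.one_ne_zero]

theorem mul_conj (a : Octonion) : a * conj a = normSq a • 1 := by
  refine ext ?_ ?_
  · simp only [fst_mul, conj_fst, conj_snd, star_neg, neg_mul, sub_neg_eq_add,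
      Quaternion.self_mul_star, Quaternion.star_mul_self, smul_fst, one_fst, normSq]
    rw [← Quaternion.coe_add, ← Algebra.algebraMap_eq_smul_one]
    rfl
  · simp [snd_mul]

theorem add_conj (a : Octonion) : a + conj a = (2 * a.1.re) • 1 := by
  refine ext ?_ ?_
  · rw [add_fst, conj_fst, Quaternion.self_add_star, smul_fst, one_fst,
      ← Algebra.algebraMap_eq_smul_one, map_mul, map_ofNat]
    rfl
  · simp

theorem mul_self_eq (a : Octonion) : a * a = (2 * a.1.re) • a - normSq a • 1 := by
  rw [← mul_conj, ← mul_smul_one, ← mul_sub, ← add_conj, add_sub_cancel_right]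

theorem eq_zero_of_mul_self_eq_zero {a : Octonion} (h : a * a = 0) : a = 0 := by
  have h' := h
  rw [mul_self_eq, sub_eq_zero] at h'
  by_cases hre : a.1.re = 0
  · rwa [hre, mul_zero, zero_smul, eq_comm, smul_one_eq_zero, normSq_eq_zero] at h'
  · have ha : a = ((2 * a.1.re)⁻¹ * normSq a) • 1 := by
      rw [mul_smul, ← h', smul_smul, inv_mul_cancel₀ (by simpa using hre), one_smul]
    rw [ha, smul_one_mul, smul_smul, smul_one_eq_zero, mul_self_eq_zero] at h
    rw [ha, h, zero_smul]

theorem isReal_zero : (0 : Octonion).IsReal := ⟨0, (zero_smul ℝ 1).symm⟩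

theorem isReal_one : (1 : Octonion).IsReal := ⟨1, (one_smul ℝ 1).symm⟩

theorem IsReal.add {a b : Octonion} (ha : a.IsReal) (hb : b.IsReal) : (a + b).IsReal := by
  obtain ⟨r, rfl⟩ := ha; obtain ⟨s, rfl⟩ := hb; exact ⟨r + s, (add_smul r s 1).symm⟩

theorem IsReal.smul {a : Octonion} (ha : a.IsReal) (r : ℝ) : (r • a).IsReal := by
  obtain ⟨s, rfl⟩ := ha; exact ⟨r * s, (mul_smul r s 1).symm⟩

theorem IsReal.mul {a b : Octonion} (ha : a.IsReal) (hb : b.IsReal) : (a * b).IsReal := by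
  obtain ⟨r, rfl⟩ := ha; rw [smul_one_mul]; exact hb.smul r

theorem IsReal.assoc_left {c : Octonion} (hc : c.IsReal) (a b : Octonion) :
    c * a * b = c * (a * b) := by
  obtain ⟨r, rfl⟩ := hc; rw [smul_one_mul, smul_one_mul, smul_mul_assoc]

theorem IsReal.assoc_mid {c : Octonion} (hc : c.IsReal) (a b : Octonion) :
    a * c * b = a * (c * b) := by
  obtain ⟨r, rfl⟩ := hc; rw [mul_smul_one, smul_one_mul, smul_mul_assoc, mul_smul_comm]

theorem IsReal.assoc_right {c : Octonion} (hc : c.IsReal) (a b : Octonion) :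
    a * b * c = a * (b * c) := by
  obtain ⟨r, rfl⟩ := hc; rw [mul_smul_one, mul_smul_one, mul_smul_comm]

theorem isReal_of_eq_re {c : Octonion} (h1 : c.1 = c.1.re) (h2 : c.2 = 0) : c.IsReal :=
  ⟨c.1.re, ext (by rw [h1, smul_fst, one_fst, ← Algebra.algebraMap_eq_smul_one]; rfl)
    (by rw [h2, smul_snd, one_snd, smul_zero])⟩

theorem isReal_of_forall_mul_comm {c : Octonion} (h : ∀ u : Octonion, c * u = u * c) :
    c.IsReal := by
  -- commuting with `ℓ` makes `c.1` real, commuting with `i` kills `c.2`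
  have h1 := congrArg Prod.snd (h (mk 0 1))
  have h2 := congrArg Prod.snd (h (mk (qmk 0 1 0 0) 0))
  simp only [snd_mul, mk_fst, mk_snd, zero_mul, zero_add, add_zero, mul_zero, star_zero,
    one_mul] at h1 h2
  refine isReal_of_eq_re (Quaternion.star_eq_self.mp h1.symm) ?_
  have hne : star (qmk 0 1 0 0) - qmk 0 1 0 0 ≠ 0 := fun h => by
    have := congrArg QuaternionAlgebra.imI h
    norm_num at this
  exact (mul_eq_zero.mp (by rw [mul_sub, h2, sub_self])).resolve_right hne

theorem isReal_of_forall_assoc_mid {c : Octonion}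
    (h : ∀ u v : Octonion, u * c * v = u * (c * v)) : c.IsReal := by
  -- `(s c) ℓ = s (c ℓ)` makes `c.1` central in `ℍ`, and `(i c) j = i (c j)` kills `c.2`
  have h1 : ∀ s, s * c.1 = c.1 * s := fun s => by
    simpa [fst_mul, snd_mul] using congrArg Prod.snd (h (mk s 0) (mk 0 1))
  have h2 := congrArg Prod.snd (h (mk (qmk 0 1 0 0) 0) (mk (qmk 0 0 1 0) 0))
  simp only [fst_mul, snd_mul, mk_fst, mk_snd, star_zero, star_mul, mul_zero, zero_mul,
    sub_zero, add_zero, zero_add] at h2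
  refine isReal_of_eq_re (Quaternion.eq_re_of_forall_mul_comm h1) ?_
  have hne : qmk 0 1 0 0 * star (qmk 0 0 1 0) - star (qmk 0 0 1 0) * qmk 0 1 0 0 ≠ 0 :=
    fun h => by
      have := congrArg QuaternionAlgebra.imK h
      norm_num [Quaternion.imK_mul] at this
  exact (mul_eq_zero.mp (by rw [mul_sub, ← mul_assoc, ← mul_assoc, h2, sub_self])).resolve_right
    hne

end Octonion

namespace OctPoly

theorem mul_def (p q : OctPoly) :
    p * q = p.sum fun i a => q.sum fun j b => single (i + j) (a * b) := rfl

theorem single_mul (i : ℕ) (a : Octonion) (q : OctPoly) :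
    single i a * q = q.sum fun j b => single (i + j) (a * b) :=
  sum_single_index (by simp)

theorem mul_eq_sum_single_mul (p q : OctPoly) : p * q = p.sum fun i a => single i a * q :=
  sum_congr fun i _ => (single_mul i (p i) q).symm

theorem single_mul_single (i j : ℕ) (a b : Octonion) :
    (single i a : OctPoly) * single j b = single (i + j) (a * b) := by
  rw [single_mul, sum_single_index (by rw [MulZeroClass.mul_zero, single_zero])]

protected theorem zero_mul (q : OctPoly) : 0 * q = 0 := sum_zero_index

protected theorem mul_add (p q r : OctPoly) : p * (q + r) = p * q + p * r := by
  simp only [mul_def, ← sum_add]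
  refine sum_congr fun i _ => sum_add_index' (fun j => by rw [MulZeroClass.mul_zero, single_zero])
    fun j b₁ b₂ => by rw [mul_add, single_add]

protected theorem add_mul (p q r : OctPoly) : (p + q) * r = p * r + q * r := by
  refine sum_add_index' (fun i => by simp) fun i a₁ a₂ => ?_
  simp only [← sum_add, add_mul, single_add]

noncomputable def mulLeft (p : OctPoly) : OctPoly →+ OctPoly where
  toFun := (p * ·)
  map_zero' := OctPoly.mul_zero p
  map_add' := OctPoly.mul_add p

noncomputable def mulRight (q : OctPoly) : OctPoly →+ OctPoly where
  toFun := (· * q)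
  map_zero' := OctPoly.zero_mul q
  map_add' p p' := OctPoly.add_mul p p' q

theorem mul_finsuppSum {α M : Type*} [Zero M] (p : OctPoly) (s : α →₀ M)
    (g : α → M → OctPoly) : p * s.sum g = s.sum fun a m => p * g a m :=
  map_finsuppSum (mulLeft p) s g

theorem finsuppSum_mul {α M : Type*} [Zero M] (s : α →₀ M) (g : α → M → OctPoly)
    (q : OctPoly) : s.sum g * q = s.sum fun a m => g a m * q :=
  map_finsuppSum (mulRight q) s g

theorem mul_assoc_of_coeff {p q r : OctPoly}
    (h : ∀ i j k, p i * q j * r k = p i * (q j * r k)) : p * q * r = p * (q * r) := by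
  calc p * q * r
      = p.sum fun i a => q.sum fun j b => r.sum fun k c => single (i + j + k) (a * b * c) := by
        simp only [mul_def p q, finsuppSum_mul, single_mul _ _ r]
    _ = p.sum fun i a => q.sum fun j b => r.sum fun k c => single (i + (j + k)) (a * (b * c)) :=
        sum_congr fun i _ => sum_congr fun j _ => sum_congr fun k _ => by rw [h, add_assoc]
    _ = p * (q * r) := by
        rw [mul_eq_sum_single_mul p, mul_eq_sum_single_mul q]
        simp only [mul_finsuppSum, single_mul _ _ r, single_mul_single]

theorem oneR_mul (p : OctPoly) : oneR * p = p := by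
  rw [oneR, single_mul]
  simp only [zero_add, one_mul]
  exact sum_single p

theorem mul_oneR (p : OctPoly) : p * oneR = p := by
  rw [mul_def]
  simp only [oneR, sum_single_index, MulZeroClass.mul_zero, single_zero, add_zero, mul_one]
  exact sum_single p

theorem single_succ_one (k : ℕ) : (single (k + 1) 1 : OctPoly) = Yv * single k 1 := by
  rw [Yv, single_mul_single, one_mul, add_comm]

theorem Yv_mul_single_zero_comm (e : Octonion) : Yv * single 0 e = single 0 e * Yv := by
  rw [Yv, single_mul_single, single_mul_single, one_mul, mul_one]

theorem single_zero_mul_apply (u : Octonion) (p : OctPoly) (k : ℕ) :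
    ((single 0 u : OctPoly) * p) k = u * p k := by
  classical
  simp only [single_mul, zero_add, Finsupp.sum_apply, single_apply]
  rw [sum_ite_eq']
  split_ifs with hk
  · rfl
  · rw [notMem_support_iff.mp hk, MulZeroClass.mul_zero]

theorem mul_single_zero_apply (p : OctPoly) (u : Octonion) (k : ℕ) :
    (p * (single 0 u : OctPoly)) k = p k * u := by
  classical
  simp only [mul_def, sum_single_index, MulZeroClass.mul_zero, single_zero, add_zero,
    Finsupp.sum_apply, single_apply]
  rw [sum_ite_eq']
  split_ifs with hk
  · rfl
  · rw [notMem_support_iff.mp hk, MulZeroClass.zero_mul]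

theorem mul_apply_add_of_le {p q : OctPoly} {m n : ℕ} (hp : ∀ i ∈ p.support, i ≤ m)
    (hq : ∀ j ∈ q.support, j ≤ n) : (p * q) (m + n) = p m * q n := by
  classical
  rw [mul_def, Finsupp.sum_apply, Finsupp.sum, Finset.sum_eq_single m]
  · rw [Finsupp.sum_apply, Finsupp.sum, Finset.sum_eq_single n]
    · exact single_eq_same
    · intro j hj _
      exact single_eq_of_ne (by have := hq j hj; omega)
    · intro hn
      rw [notMem_support_iff.mp hn, MulZeroClass.mul_zero, single_zero, Finsupp.zero_apply]
  · intro i hi _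
    rw [Finsupp.sum_apply]
    refine Finset.sum_eq_zero fun j hj => single_eq_of_ne ?_
    have := hp i hi; have := hq j hj; omega
  · intro hm
    rw [notMem_support_iff.mp hm, Finsupp.sum_apply]
    simp

theorem eq_single_zero_of_mul_self_eq {p : OctPoly} {t n : ℝ}
    (h : p * p = t • p - n • oneR) : p = single 0 (p 0) := by
  refine eq_single_iff.mpr ⟨fun k hk => ?_, rfl⟩
  by_contra hk0
  set m := p.support.max' ⟨k, hk⟩
  have hm : 0 < m := by
    have := p.support.le_max' k hk; rw [Finset.mem_singleton] at hk0; omega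
  have hle : ∀ i ∈ p.support, i ≤ m := fun i hi => p.support.le_max' i hi
  have hp : p (m + m) = 0 := notMem_support_iff.mp fun hmm => by have := hle _ hmm; omega
  have hone : oneR (m + m) = 0 := single_eq_of_ne (by omega)
  have hsq := mul_apply_add_of_le hle hle
  rw [h, Finsupp.sub_apply, Finsupp.smul_apply, Finsupp.smul_apply, hp, hone, smul_zero,
    smul_zero, sub_zero] at hsq
  exact mem_support_iff.mp (p.support.max'_mem _) (Octonion.eq_zero_of_mul_self_eq_zero hsq.symm)

/-- `p ∈ ℝ[y]` -/
def IsReal (p : OctPoly) : Prop := ∀ k, (p k).IsReal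

theorem isReal_zero : IsReal 0 := fun _ => Octonion.isReal_zero

theorem isReal_single {k : ℕ} {c : Octonion} (hc : c.IsReal) : IsReal (single k c) :=
  fun m => by
    classical
    rw [single_apply]; split_ifs
    exacts [hc, Octonion.isReal_zero]

theorem isReal_Yv : Yv.IsReal := isReal_single Octonion.isReal_one

theorem IsReal.add {p q : OctPoly} (hp : p.IsReal) (hq : q.IsReal) : (p + q).IsReal :=
  fun k => (hp k).add (hq k)

theorem IsReal.smul {p : OctPoly} (hp : p.IsReal) (r : ℝ) : (r • p).IsReal := fun k =>
  (hp k).smul r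

theorem isReal_finsuppSum {α M : Type*} [Zero M] (s : α →₀ M) {g : α → M → OctPoly}
    (h : ∀ a, (g a (s a)).IsReal) : IsReal (s.sum g) := fun k => by
  rw [Finsupp.sum_apply]
  exact Finset.sum_induction _ Octonion.IsReal (fun _ _ => Octonion.IsReal.add)
    Octonion.isReal_zero fun a _ => h a k

theorem IsReal.mul {p q : OctPoly} (hp : p.IsReal) (hq : q.IsReal) : (p * q).IsReal :=
  isReal_finsuppSum p fun i => isReal_finsuppSum q fun j => isReal_single ((hp i).mul (hq j))

theorem IsReal.assoc_left {f : OctPoly} (hf : f.IsReal) (p q : OctPoly) :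
    f * p * q = f * (p * q) :=
  mul_assoc_of_coeff fun i _ _ => (hf i).assoc_left _ _

theorem IsReal.assoc_mid {g : OctPoly} (hg : g.IsReal) (p q : OctPoly) :
    p * g * q = p * (g * q) :=
  mul_assoc_of_coeff fun _ j _ => (hg j).assoc_mid _ _

theorem IsReal.assoc_right {g : OctPoly} (hg : g.IsReal) (p q : OctPoly) :
    p * q * g = p * (q * g) :=
  mul_assoc_of_coeff fun _ _ k => (hg k).assoc_right _ _

theorem isReal_map_of_isReal_map_single_one (φ : OctPoly →+ OctPoly)
    (hφ : ∀ (r : ℝ) (p : OctPoly), φ (r • p) = r • φ p)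
    (h : ∀ k, IsReal (φ (single k 1))) {p : OctPoly} (hp : p.IsReal) : IsReal (φ p) := by
  rw [← sum_single p, map_finsuppSum]
  refine isReal_finsuppSum p fun k => ?_
  obtain ⟨r, hr⟩ := hp k
  rw [hr, ← smul_single, hφ]
  exact (h k).smul r

end OctPoly

open OctPoly

namespace IsAlgEndo

variable {σ : OctPoly →+ OctPoly}

theorem map_single_zero (hσ : IsAlgEndo σ) (e : Octonion) :
    σ (single 0 e) = single 0 (σ (single 0 e) 0) := by
  refine eq_single_zero_of_mul_self_eq (t := 2 * e.1.re) (n := e.normSq) ?_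
  rw [← hσ.1, ← hσ.2.1, ← hσ.2.2, ← hσ.2.2, ← map_sub, single_mul_single, Octonion.mul_self_eq,
    single_sub, smul_single, oneR, smul_single, add_zero]

noncomputable def onConstants (hσ : IsAlgEndo σ) : Octonion →ₗ[ℝ] Octonion where
  toFun e := σ (single 0 e) 0
  map_add' e f := by rw [single_add, map_add, Finsupp.add_apply]
  map_smul' r e := by rw [← smul_single, hσ.2.2, Finsupp.smul_apply, RingHom.id_apply]

theorem exists_map_single_zero_eq (hσ : IsAlgEndo σ) (u : Octonion) :
    ∃ e, σ (single 0 e) = single 0 u := by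
  have hinj : Function.Injective hσ.onConstants := by
    refine (injective_iff_map_eq_zero _).mpr fun e he => ?_
    have h := congrArg σ (single_mul_single 0 0 e e.conj)
    rw [hσ.1, hσ.map_single_zero, hσ.map_single_zero (e.conj), add_zero, Octonion.mul_conj,
      ← smul_single, hσ.2.2, ← oneR, hσ.2.1] at h
    change σ (single 0 e) 0 = 0 at he
    rw [he, single_zero, OctPoly.zero_mul] at h
    have h0 := congrArg (· 0) h
    simp only [Finsupp.coe_zero, Pi.zero_apply, Finsupp.smul_apply, oneR, single_eq_same] at h0
    rwa [eq_comm, Octonion.smul_one_eq_zero, Octonion.normSq_eq_zero] at h0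
  obtain ⟨e, he⟩ := LinearMap.injective_iff_surjective.mp hinj u
  exact ⟨e, by rw [hσ.map_single_zero, ← he]; rfl⟩

theorem isReal_map_Yv (hσ : IsAlgEndo σ) : IsReal (σ Yv) := fun k => by
  refine Octonion.isReal_of_forall_mul_comm fun u => ?_
  obtain ⟨e, he⟩ := hσ.exists_map_single_zero_eq u
  have key : σ Yv * single 0 u = single 0 u * σ Yv := by
    rw [← he, ← hσ.1, ← hσ.1, Yv_mul_single_zero_comm]
  simpa only [mul_single_zero_apply, single_zero_mul_apply] using congrArg (· k) key

theorem isReal_map (hσ : IsAlgEndo σ) {p : OctPoly} (hp : p.IsReal) : IsReal (σ p) := by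
  refine isReal_map_of_isReal_map_single_one σ hσ.2.2 (fun k => ?_) hp
  induction k with
  | zero => rw [← oneR, hσ.2.1]; exact isReal_single Octonion.isReal_one
  | succ k ih => rw [single_succ_one, hσ.1]; exact hσ.isReal_map_Yv.mul ih

end IsAlgEndo

namespace IsSigmaDerivation

variable {σ δ : OctPoly →+ OctPoly}

theorem map_oneR (hσ : IsAlgEndo σ) (hδ : IsSigmaDerivation σ δ) : δ oneR = 0 := by
  have h := hδ.1 oneR oneR
  rwa [mul_oneR, hσ.2.1, oneR_mul, mul_oneR, left_eq_add] at h

theorem isReal_map_Yv (hσ : IsAlgEndo σ) (hδ : IsSigmaDerivation σ δ) : IsReal (δ Yv) :=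
  fun k => by
  refine Octonion.isReal_of_forall_assoc_mid fun u v => ?_
  obtain ⟨e, he⟩ := hσ.exists_map_single_zero_eq u
  -- expand `δ ((e y) v) = δ (e (y v))`: as `σ y` and `y` lie in `ℝ[y]`, all other terms cancel
  have key : single 0 u * δ Yv * single 0 v = single 0 u * (δ Yv * single 0 v) := by
    have h := congrArg δ (isReal_Yv.assoc_mid (single 0 e) (single 0 v))
    rw [hδ.1, hδ.1, hσ.1, hδ.1, hδ.1, OctPoly.add_mul, OctPoly.mul_add,
      hσ.isReal_map_Yv.assoc_mid, isReal_Yv.assoc_mid, he, add_assoc] at h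
    exact add_right_cancel (add_left_cancel h)
  simpa only [mul_single_zero_apply, single_zero_mul_apply] using congrArg (· k) key

theorem isReal_map (hσ : IsAlgEndo σ) (hδ : IsSigmaDerivation σ δ) {p : OctPoly}
    (hp : p.IsReal) : IsReal (δ p) := by
  refine isReal_map_of_isReal_map_single_one δ hδ.2 (fun k => ?_) hp
  induction k with
  | zero => rw [← oneR, hδ.map_oneR hσ]; exact isReal_zero
  | succ k ih =>
    rw [single_succ_one, hδ.1]
    exact (hσ.isReal_map_Yv.mul ih).add ((hδ.isReal_map_Yv hσ).mul
      (isReal_single Octonion.isReal_one))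

end IsSigmaDerivation

namespace OrePoly

variable {σ δ : OctPoly →+ OctPoly}

/-- `u ↦ r · u` in `S` for a constant `r ∈ R`. -/
noncomputable def mulLeft (r : OctPoly) : OrePoly →+ OrePoly :=
  mapRange.addMonoidHom (OctPoly.mulLeft r)

theorem mulLeft_apply (r : OctPoly) (u : OrePoly) (k : ℕ) : mulLeft r u k = r * u k := rfl

theorem mulLeft_single (r : OctPoly) (k : ℕ) (s : OctPoly) :
    mulLeft r (single k s) = single k (r * s) :=
  mapRange_single (hf := OctPoly.mul_zero r)

theorem mulLeft_add (r r' : OctPoly) (u : OrePoly) :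
    mulLeft (r + r') u = mulLeft r u + mulLeft r' u :=
  Finsupp.ext fun k => OctPoly.add_mul r r' (u k)

theorem oreMul_eq_sum (p q : OrePoly) :
    oreMul σ δ p q = p.sum fun i r => mulLeft r ((xmul σ δ)^[i] q) := rfl

theorem oreMul_apply (p q : OrePoly) (k : ℕ) :
    oreMul σ δ p q k = p.sum fun i r => r * ((xmul σ δ)^[i] q) k :=
  Finsupp.sum_apply

theorem oreMul_single_left (i : ℕ) (r : OctPoly) (q : OrePoly) :
    oreMul σ δ (single i r) q = mulLeft r ((xmul σ δ)^[i] q) :=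
  sum_single_index (Finsupp.ext fun _ => OctPoly.zero_mul _)

theorem oreMul_add_left (p p' q : OrePoly) :
    oreMul σ δ (p + p') q = oreMul σ δ p q + oreMul σ δ p' q :=
  sum_add_index' (fun _ => Finsupp.ext fun _ => OctPoly.zero_mul _)
    fun _ r r' => mulLeft_add r r' _

theorem oreMul_finsuppSum_left {α M : Type*} [Zero M] (s : α →₀ M) (g : α → M → OrePoly)
    (c : OrePoly) : oreMul σ δ (s.sum g) c = s.sum fun a m => oreMul σ δ (g a m) c :=
  map_finsuppSum (AddMonoidHom.mk' (oreMul σ δ · c) fun p p' => oreMul_add_left p p' c) s g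

theorem mulLeft_oreMul {r : OctPoly} {u c : OrePoly}
    (h : ∀ j k, r * u j * ((xmul σ δ)^[j] c) k = r * (u j * ((xmul σ δ)^[j] c) k)) :
    oreMul σ δ (mulLeft r u) c = mulLeft r (oreMul σ δ u c) := by
  ext1 k
  rw [mulLeft_apply, oreMul_apply, oreMul_apply, mul_finsuppSum, mulLeft,
    mapRange.addMonoidHom_apply,
    sum_mapRange_index (h := fun j r => r * ((xmul σ δ)^[j] c) k) fun _ => OctPoly.zero_mul _]
  exact sum_congr fun j _ => h j k

theorem xmul_single (j : ℕ) (r : OctPoly) :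
    xmul σ δ (single j r) = single (j + 1) (σ r) + single j (δ r) :=
  liftAddHom_apply_single _ _ _

theorem xmul_mulLeft (hσ : ∀ p q, σ (p * q) = σ p * σ q)
    (hδ : ∀ p q, δ (p * q) = σ p * δ q + δ p * q) (r : OctPoly) (w : OrePoly) :
    xmul σ δ (mulLeft r w) = mulLeft (σ r) (xmul σ δ w) + mulLeft (δ r) w := by
  induction w using Finsupp.induction_linear with
  | zero => simp only [map_zero, add_zero]
  | add w w' ih ih' => simp only [map_add, ih, ih']; abel
  | single k s =>
    rw [mulLeft_single, xmul_single, xmul_single, map_add, mulLeft_single, mulLeft_single,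
      mulLeft_single, hσ, hδ, single_add]
    abel

theorem xmul_oreMul (hσ : ∀ p q, σ (p * q) = σ p * σ q)
    (hδ : ∀ p q, δ (p * q) = σ p * δ q + δ p * q) (p q : OrePoly) :
    xmul σ δ (oreMul σ δ p q) = oreMul σ δ (xmul σ δ p) q := by
  induction p using Finsupp.induction_linear with
  | zero => simp only [oreMul_eq_sum, sum_zero_index, map_zero]
  | add p p' ih ih' => rw [oreMul_add_left, map_add, map_add, ih, ih', oreMul_add_left]
  | single i r =>
    rw [oreMul_single_left, xmul_single, oreMul_add_left, oreMul_single_left, oreMul_single_left,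
      Function.iterate_succ_apply', xmul_mulLeft hσ hδ]

theorem iterate_xmul_oreMul (hσ : ∀ p q, σ (p * q) = σ p * σ q)
    (hδ : ∀ p q, δ (p * q) = σ p * δ q + δ p * q) (n : ℕ) (p q : OrePoly) :
    (xmul σ δ)^[n] (oreMul σ δ p q) = oreMul σ δ ((xmul σ δ)^[n] p) q := by
  induction n generalizing p with
  | zero => rfl
  | succ n ih =>
    rw [Function.iterate_succ_apply, Function.iterate_succ_apply, xmul_oreMul hσ hδ, ih]

theorem isReal_xmul (hσ : ∀ p : OctPoly, p.IsReal → IsReal (σ p))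
    (hδ : ∀ p : OctPoly, p.IsReal → IsReal (δ p)) {p : OrePoly} (hp : ∀ i, (p i).IsReal)
    (k : ℕ) : IsReal (xmul σ δ p k) := by
  have hsingle : ∀ {j : ℕ} {r : OctPoly}, r.IsReal → IsReal (single j r k) := fun hr => by
    classical
    rw [single_apply]; split_ifs
    exacts [hr, isReal_zero]
  rw [xmul, liftAddHom_apply, Finsupp.sum_apply]
  exact Finset.sum_induction _ IsReal (fun _ _ => IsReal.add) isReal_zero
    fun i _ => (hsingle (hσ _ (hp i))).add (hsingle (hδ _ (hp i)))

theorem isReal_iterate_xmul (hσ : ∀ p : OctPoly, p.IsReal → IsReal (σ p))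
    (hδ : ∀ p : OctPoly, p.IsReal → IsReal (δ p)) {p : OrePoly} (hp : ∀ i, (p i).IsReal)
    (n k : ℕ) : IsReal ((xmul σ δ)^[n] p k) := by
  induction n generalizing k with
  | zero => exact hp k
  | succ n ih => rw [Function.iterate_succ_apply']; exact isReal_xmul hσ hδ ih k

theorem oreMul_assoc_of_isReal_left (hσ : ∀ p q, σ (p * q) = σ p * σ q)
    (hδ : ∀ p q, δ (p * q) = σ p * δ q + δ p * q) {a : OrePoly} (ha : ∀ i, (a i).IsReal)
    (b c : OrePoly) : oreMul σ δ a (oreMul σ δ b c) = oreMul σ δ (oreMul σ δ a b) c := by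
  rw [oreMul_eq_sum a, oreMul_eq_sum a b, oreMul_finsuppSum_left]
  refine sum_congr fun i _ => ?_
  rw [iterate_xmul_oreMul hσ hδ, mulLeft_oreMul fun _ _ => (ha i).assoc_left _ _]

theorem oreMul_assoc_of_isReal_mid (hσ : ∀ p q, σ (p * q) = σ p * σ q)
    (hδ : ∀ p q, δ (p * q) = σ p * δ q + δ p * q) {a : OrePoly}
    (ha : ∀ n i, IsReal ((xmul σ δ)^[n] a i)) (b c : OrePoly) :
    oreMul σ δ (oreMul σ δ b a) c = oreMul σ δ b (oreMul σ δ a c) := by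
  rw [oreMul_eq_sum b a, oreMul_finsuppSum_left, oreMul_eq_sum b]
  refine sum_congr fun m _ => ?_
  rw [mulLeft_oreMul fun j _ => (ha m j).assoc_mid _ _, iterate_xmul_oreMul hσ hδ]

theorem oreMul_assoc_of_isReal_right (hσ : ∀ p q, σ (p * q) = σ p * σ q)
    (hδ : ∀ p q, δ (p * q) = σ p * δ q + δ p * q) {a : OrePoly}
    (ha : ∀ n i, IsReal ((xmul σ δ)^[n] a i)) (b c : OrePoly) :
    oreMul σ δ (oreMul σ δ b c) a = oreMul σ δ b (oreMul σ δ c a) := by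
  rw [oreMul_eq_sum b c, oreMul_finsuppSum_left, oreMul_eq_sum b]
  refine sum_congr fun m _ => ?_
  rw [mulLeft_oreMul fun j k => (ha j k).assoc_right _ _, iterate_xmul_oreMul hσ hδ]

end OrePoly

theorem mem_nucleus_of_real_coeffs_general (σ δ : OctPoly →+ OctPoly)
    (hσ : IsAlgEndo σ)
    (hδ : IsSigmaDerivation σ δ)
    (a : OrePoly)
    (hcoeff : ∀ i j : ℕ, Octonion.IsReal (a i j)) :
    OreNucleus σ δ a := by
  have hxa : ∀ n i, IsReal ((xmul σ δ)^[n] a i) :=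
    OrePoly.isReal_iterate_xmul (fun _ => hσ.isReal_map) (fun _ => hδ.isReal_map hσ) hcoeff
  exact ⟨OrePoly.oreMul_assoc_of_isReal_left hσ.1 hδ.1 hcoeff,
    OrePoly.oreMul_assoc_of_isReal_mid hσ.1 hδ.1 hxa,
    OrePoly.oreMul_assoc_of_isReal_right hσ.1 hδ.1 hxa⟩

/-- Let `R = 𝕆[y]`, `σ` an `ℝ`-algebra endomorphism of `R` with `deg_y (σ y) > 1`,
`δ` a `σ`-derivation, and `S = R[x; σ, δ]` the non-associative Ore extension.
If `a ∈ S` has positive degree in `x` and all its coefficients lie in `ℝ[y]`,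
then `a` belongs to the nucleus `N(S)`. -/
theorem mem_nucleus_of_real_coeffs (σ δ : OctPoly →+ OctPoly)
    (hσ : IsAlgEndo σ) (hσy : ((1 : ℕ) : WithBot ℕ) < (σ Yv).support.max)
    (hδ : IsSigmaDerivation σ δ)
    (a : OrePoly) (hdeg : ((0 : ℕ) : WithBot ℕ) < a.support.max)
    (hcoeff : ∀ i j : ℕ, Octonion.IsReal (a i j)) :
    OreNucleus σ δ a :=
  mem_nucleus_of_real_coeffs_general σ δ hσ hδ a hcoeff
end
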